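/- Fix m ∈ ℕ and h ∈ (0,1), set μ_m := −1/log₂(a_m) and γ := 2^{m/μ_m}·f_m(h). Then for every n ≥ m and every subset S ⊆ {0,1}^n with |S| ≥ 2^n·(1 − h − (γ/4)·2^{−n/μ_m}), the sum of the error probabilities of the sub-channels indexed by S satisfies Σ_{b∈S} H_b(h)/2 ≥ (γ²/32)·2^{n(1 − 2/μ_m)}. -/

import Mathlib

/-!
Write `N = 2^n` and `x_b = H_b(h)`. The two polarization maps `x ↦ x²` and `x ↦ 1 - (1-x)²`
average to `x` and turn `x(1-x)` into the recursion for `f`, so `∑_b x_b = N h` and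
`∑_b x_b (1 - x_b) = N f_n(h)`. Bounding `x(1-x)` by `x` on `S` and by `1 - x` off `S` gives
`N f_n(h) + N h ≤ 2 ∑_{b∈S} x_b + |Sᶜ|`. As the recursion is linear, `f_{k+1} ≥ a_m f_k`
propagates from `k = m` to all `k ≥ m`, so `f_n(h) ≥ a_m^{n-m} f_m(h) = γ 2^{-n/μ_m} =: δ`.
The hypothesis `|Sᶜ| ≤ N (h + δ/4)` then leaves `∑_{b∈S} x_b ≥ 3Nδ/8`, which exceeds `Nδ²/16`
because `δ ≤ f_n(h) ≤ 1/4`.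
-/

/-- The polynomials `f_n : [0,1] → ℝ` defined by `f_0(h) = h(1-h)` and
`f_n(h) = (f_{n-1}(h^2) + f_{n-1}(1-(1-h)^2))/2`. -/
noncomputable def f : ℕ → ℝ → ℝ
  | 0, h => h * (1 - h)
  | n + 1, h => (f n (h ^ 2) + f n (1 - (1 - h) ^ 2)) / 2

/-- `a_m := inf_{h ∈ (0,1)} f_{m+1}(h) / f_m(h)`. -/
noncomputable def a (m : ℕ) : ℝ :=
  sInf ((fun h => f (m + 1) h / f m h) '' Set.Ioo (0 : ℝ) 1)

/-- `H_b(h)`: starting from `h_0 = h`, apply `x ↦ x²` when the bit is `1` (true) and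
`x ↦ 1 - (1-x)²` when the bit is `0` (false), following the bits `b 0, b 1, …` in order.
This is the erasure probability of the polar sub-channel of `BEC(h)` indexed by `b`. -/
noncomputable def Hb {n : ℕ} (b : Fin n → Bool) (h : ℝ) : ℝ :=
  (List.ofFn b).foldl (fun x bi => if bi then x ^ 2 else 1 - (1 - x) ^ 2) h

/-- `μ_m := -1 / log₂ a_m`. -/
noncomputable def mu (m : ℕ) : ℝ := -1 / Real.logb 2 (a m)

/-- `γ := 2^(m/μ_m) · f_m(h)`. -/
noncomputable def gam (m : ℕ) (h : ℝ) : ℝ := (2 : ℝ) ^ ((m : ℝ) / mu m) * f m h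

open Finset

lemma sq_mem_Ioo {x : ℝ} (hx : x ∈ Set.Ioo (0 : ℝ) 1) : x ^ 2 ∈ Set.Ioo (0 : ℝ) 1 := by
  obtain ⟨h0, h1⟩ := hx
  constructor <;> nlinarith

lemma one_sub_one_sub_sq_mem_Ioo {x : ℝ} (hx : x ∈ Set.Ioo (0 : ℝ) 1) :
    1 - (1 - x) ^ 2 ∈ Set.Ioo (0 : ℝ) 1 := by
  obtain ⟨h0, h1⟩ := hx
  constructor <;> nlinarith

lemma f_pos (n : ℕ) {h : ℝ} (hh : h ∈ Set.Ioo (0 : ℝ) 1) : 0 < f n h := by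
  induction n generalizing h with
  | zero => exact mul_pos hh.1 (sub_pos.2 hh.2)
  | succ n ih =>
    have := ih (sq_mem_Ioo hh)
    have := ih (one_sub_one_sub_sq_mem_Ioo hh)
    simp only [f]
    linarith

lemma f_le_one_quarter (n : ℕ) {h : ℝ} (hh : h ∈ Set.Ioo (0 : ℝ) 1) : f n h ≤ 1 / 4 := by
  induction n generalizing h with
  | zero =>
    simp only [f]
    nlinarith [sq_nonneg (2 * h - 1)]
  | succ n ih =>
    have := ih (sq_mem_Ioo hh)
    have := ih (one_sub_one_sub_sq_mem_Ioo hh)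
    simp only [f]
    linarith

lemma mul_f_le_f_succ_of_le {c : ℝ} {m : ℕ}
    (hm : ∀ h ∈ Set.Ioo (0 : ℝ) 1, c * f m h ≤ f (m + 1) h) {n : ℕ} (hn : m ≤ n) :
    ∀ h ∈ Set.Ioo (0 : ℝ) 1, c * f n h ≤ f (n + 1) h := by
  induction n, hn using Nat.le_induction with
  | base => exact hm
  | succ n _ ih =>
    intro h hh
    have := ih _ (sq_mem_Ioo hh)
    have := ih _ (one_sub_one_sub_sq_mem_Ioo hh)
    simp only [f] at *
    linarith

lemma three_quarters_mul_f_le_f_succ (n : ℕ) {h : ℝ} (hh : h ∈ Set.Ioo (0 : ℝ) 1) :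
    3 / 4 * f n h ≤ f (n + 1) h := by
  refine mul_f_le_f_succ_of_le (fun x ⟨h0, h1⟩ => ?_) n.zero_le h hh
  simp only [f]
  nlinarith [mul_nonneg (mul_nonneg h0.le (sub_nonneg.2 h1.le)) (sq_nonneg (2 * x - 1))]

lemma bddBelow_ratio (m : ℕ) :
    BddBelow ((fun h => f (m + 1) h / f m h) '' Set.Ioo (0 : ℝ) 1) := by
  refine ⟨0, ?_⟩
  rintro _ ⟨h, hh, rfl⟩
  exact (div_pos (f_pos _ hh) (f_pos _ hh)).le

lemma a_pos (m : ℕ) : 0 < a m := by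
  refine lt_of_lt_of_le (by norm_num : (0 : ℝ) < 3 / 4)
    (le_csInf ⟨_, 1 / 2, by norm_num, rfl⟩ ?_)
  rintro _ ⟨h, hh, rfl⟩
  rw [le_div_iff₀ (f_pos m hh)]
  exact three_quarters_mul_f_le_f_succ m hh

lemma a_mul_f_le_f_succ {m n : ℕ} (hn : m ≤ n) {h : ℝ} (hh : h ∈ Set.Ioo (0 : ℝ) 1) :
    a m * f n h ≤ f (n + 1) h := by
  refine mul_f_le_f_succ_of_le (fun x hx => ?_) hn h hh
  rw [← le_div_iff₀ (f_pos m hx)]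
  exact csInf_le (bddBelow_ratio m) ⟨x, hx, rfl⟩

lemma a_pow_mul_f_le_f {m n : ℕ} (hn : m ≤ n) {h : ℝ} (hh : h ∈ Set.Ioo (0 : ℝ) 1) :
    a m ^ (n - m) * f m h ≤ f n h := by
  induction n, hn using Nat.le_induction with
  | base => simp
  | succ n hn ih =>
    calc a m ^ (n + 1 - m) * f m h = a m * (a m ^ (n - m) * f m h) := by
          rw [Nat.sub_add_comm hn, pow_succ]; ring
      _ ≤ a m * f n h := mul_le_mul_of_nonneg_left ih (a_pos m).le
      _ ≤ f (n + 1) h := a_mul_f_le_f_succ hn hh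

lemma two_rpow_div_mu (m : ℕ) (x : ℝ) : (2 : ℝ) ^ (x / mu m) = a m ^ (-x) := by
  have : x / mu m = Real.logb 2 (a m) * -x := by
    rw [mu, div_div_eq_mul_div, div_neg, div_one]
    ring
  rw [this, Real.rpow_mul (by norm_num), Real.rpow_logb (by norm_num) (by norm_num) (a_pos m)]

lemma gam_mul_two_rpow {m n : ℕ} (hn : m ≤ n) (h : ℝ) :
    gam m h * (2 : ℝ) ^ (-(n : ℝ) / mu m) = a m ^ (n - m) * f m h := by
  rw [gam, two_rpow_div_mu, two_rpow_div_mu, mul_right_comm, ← Real.rpow_add (a_pos m),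
    ← Real.rpow_natCast, Nat.cast_sub hn]
  ring_nf

lemma two_rpow_mul_one_sub_two_div_mu (m n : ℕ) :
    (2 : ℝ) ^ ((n : ℝ) * (1 - 2 / mu m)) = 2 ^ n * ((2 : ℝ) ^ (-(n : ℝ) / mu m)) ^ 2 := by
  rw [← Real.rpow_natCast, ← Real.rpow_natCast _ 2, ← Real.rpow_mul (by norm_num),
    ← Real.rpow_add (by norm_num)]
  ring_nf

lemma sum_mul_one_sub_add_sum_le {ι : Type*} [Fintype ι] [DecidableEq ι] (S : Finset ι)
    (x : ι → ℝ) (hx : ∀ i, x i ∈ Set.Icc (0 : ℝ) 1) :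
    ∑ i, x i * (1 - x i) + ∑ i, x i ≤ 2 * ∑ i ∈ S, x i + Sᶜ.card := by
  have hS : ∑ i ∈ S, x i * (1 - x i) ≤ ∑ i ∈ S, x i :=
    sum_le_sum fun i _ => by obtain ⟨h0, h1⟩ := hx i; nlinarith
  have hSc : ∑ i ∈ Sᶜ, x i * (1 - x i) ≤ ∑ i ∈ Sᶜ, (1 - x i) :=
    sum_le_sum fun i _ => by obtain ⟨h0, h1⟩ := hx i; nlinarith
  rw [sum_sub_distrib, sum_const, nsmul_one] at hSc
  rw [← sum_add_sum_compl S, ← sum_add_sum_compl S x]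
  linarith

lemma Hb_cons {n : ℕ} (c : Bool) (b : Fin n → Bool) (h : ℝ) :
    Hb (Fin.cons c b) h = Hb b (if c then h ^ 2 else 1 - (1 - h) ^ 2) := by
  simp only [Hb, List.ofFn_succ, Fin.cons_zero, Fin.cons_succ, List.foldl_cons]

lemma Hb_mem_Ioo {n : ℕ} (b : Fin n → Bool) {h : ℝ} (hh : h ∈ Set.Ioo (0 : ℝ) 1) :
    Hb b h ∈ Set.Ioo (0 : ℝ) 1 := by
  induction n generalizing h with
  | zero => simpa [Hb] using hh
  | succ n ih =>
    rw [← Fin.cons_self_tail b, Hb_cons]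
    split
    · exact ih _ (sq_mem_Ioo hh)
    · exact ih _ (one_sub_one_sub_sq_mem_Ioo hh)

lemma sum_comp_Hb_succ {n : ℕ} (F : ℝ → ℝ) (h : ℝ) :
    ∑ b : Fin (n + 1) → Bool, F (Hb b h) =
      ∑ b : Fin n → Bool, F (Hb b (h ^ 2)) +
        ∑ b : Fin n → Bool, F (Hb b (1 - (1 - h) ^ 2)) := by
  rw [← (Fin.consEquiv fun _ => Bool).sum_comp, Fintype.sum_prod_type, Fintype.sum_bool]
  simp only [Fin.consEquiv, Equiv.coe_fn_mk, Hb_cons, if_true, Bool.false_eq_true, if_false]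

lemma sum_Hb (n : ℕ) (h : ℝ) : ∑ b : Fin n → Bool, Hb b h = 2 ^ n * h := by
  induction n generalizing h with
  | zero => simp [Hb]
  | succ n ih =>
    rw [sum_comp_Hb_succ (fun x => x), ih, ih]
    ring

lemma sum_Hb_mul_one_sub_Hb (n : ℕ) (h : ℝ) :
    ∑ b : Fin n → Bool, Hb b h * (1 - Hb b h) = 2 ^ n * f n h := by
  induction n generalizing h with
  | zero => simp [Hb, f]
  | succ n ih =>
    rw [sum_comp_Hb_succ (fun x => x * (1 - x)), ih, ih, f]
    ring

/-- For `n ≥ m` and every `S ⊆ {0,1}^n` with `|S| ≥ 2^n·(1 - h - (γ/4)·2^(-n/μ_m))`,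
the sum of error probabilities satisfies `Σ_{b∈S} H_b(h)/2 ≥ (γ²/32)·2^(n(1 - 2/μ_m))`,
where `γ := 2^(m/μ_m)·f_m(h)`. -/
theorem sum_error_lower_bound (m : ℕ) (h : ℝ) (hh : h ∈ Set.Ioo (0 : ℝ) 1)
    (n : ℕ) (hn : m ≤ n) (S : Finset (Fin n → Bool))
    (hS : (2 : ℝ) ^ n * (1 - h - gam m h / 4 * (2 : ℝ) ^ (-(n : ℝ) / mu m)) ≤ S.card) :
    gam m h ^ 2 / 32 * (2 : ℝ) ^ ((n : ℝ) * (1 - 2 / mu m)) ≤ ∑ b ∈ S, Hb b h / 2 := by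
  set δ := gam m h * (2 : ℝ) ^ (-(n : ℝ) / mu m)
  have hδ : δ = a m ^ (n - m) * f m h := gam_mul_two_rpow hn h
  have hδ0 : 0 ≤ δ := hδ ▸ mul_nonneg (pow_nonneg (a_pos m).le _) (f_pos m hh).le
  have hδf : δ ≤ f n h := hδ ▸ a_pow_mul_f_le_f hn hh
  have hf : f n h ≤ 1 / 4 := f_le_one_quarter n hh
  have hsum := sum_mul_one_sub_add_sum_le S (Hb · h) fun b =>
    Set.Ioo_subset_Icc_self (Hb_mem_Ioo b hh)
  have hcard : (Sᶜ.card : ℝ) = 2 ^ n - S.card := by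
    rw [card_compl, Nat.cast_sub (card_le_univ S), Fintype.card_fun, Fintype.card_bool,
      Fintype.card_fin]
    push_cast
    ring
  rw [sum_Hb_mul_one_sub_Hb, sum_Hb, hcard] at hsum
  rw [two_rpow_mul_one_sub_two_div_mu, ← sum_div]
  have h2n : (0 : ℝ) < 2 ^ n := by positivity
  nlinarith [mul_le_mul_of_nonneg_left hδf h2n.le,
    mul_le_mul_of_nonneg_left (hδf.trans hf) (mul_nonneg hδ0 h2n.le)]
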